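/- Let Λ and Γ be finite dimensional algebras, X a Λ-Γ-bimodule and Y a Γ-Λ-bimodule, both projective as left modules, such that Λ is a direct summand of X ⊗_Γ Y as a Λ-Λ-bimodule. Then for every n ≥ 0 and all finitely generated Λ-modules U, V, the map Ext^n_Λ(U,V) → Ext^n_Γ(Hom_Λ(X,U), Hom_Λ(X,V)) induced by the functor Hom_Λ(X,−) is injective. -/

import Mathlib

noncomputable section


section Bimod

variable (Λ Γ : Type) [Ring Λ] [Ring Γ]

/-- Right multiplication by `g : Γ` on a `Λ`-`Γ`-bimodule `X`, as a `Λ`-linear map. -/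
def rmulHom (X : Type) [AddCommGroup X] [Module Λ X] [Module Γᵐᵒᵖ X]
    [SMulCommClass Λ Γᵐᵒᵖ X] (g : Γ) : X →ₗ[Λ] X where
  toFun x := (MulOpposite.op g) • x
  map_add' a b := smul_add _ a b
  map_smul' a x := (smul_comm a (MulOpposite.op g) x).symm

/-- The left `Γ`-module structure on `Hom_Λ(X, J)`, where `X` is a `Λ`-`Γ`-bimodule and `J`
a `Λ`-module: `(g • h) x = h (x • g)`. -/
def homModule (X : Type) [AddCommGroup X] [Module Λ X] [Module Γᵐᵒᵖ X]
    [SMulCommClass Λ Γᵐᵒᵖ X] (J : Type) [AddCommGroup J] [Module Λ J] :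
    Module Γ (X →ₗ[Λ] J) where
  smul g h := h.comp (rmulHom Λ Γ X g)
  one_smul h := by
    ext x
    show h ((MulOpposite.op (1 : Γ)) • x) = h x
    simp
  mul_smul g₁ g₂ h := by
    ext x
    show h ((MulOpposite.op (g₁ * g₂)) • x) =
      h ((MulOpposite.op g₂) • (MulOpposite.op g₁) • x)
    rw [MulOpposite.op_mul, mul_smul]
  smul_zero g := by
    ext x
    rfl
  smul_add g h₁ h₂ := by
    ext x
    rfl
  add_smul g₁ g₂ h := by
    ext x
    show h ((MulOpposite.op (g₁ + g₂)) • x) =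
      h ((MulOpposite.op g₁) • x) + h ((MulOpposite.op g₂) • x)
    rw [MulOpposite.op_add, add_smul, map_add]
  zero_smul h := by
    ext x
    show h ((MulOpposite.op (0 : Γ)) • x) = 0
    simp

/-- `(T, β)` is the tensor product `X ⊗_Γ Y` of the `Λ`-`Γ`-bimodule `X` and the
`Γ`-`Λ`-bimodule `Y`, as a `Λ`-`Λ`-bimodule, characterized by its universal property. -/
def IsBimodTensor
    (X : Type) [AddCommGroup X] [Module Λ X] [Module Γᵐᵒᵖ X] [SMulCommClass Λ Γᵐᵒᵖ X]
    (Y : Type) [AddCommGroup Y] [Module Γ Y] [Module Λᵐᵒᵖ Y] [SMulCommClass Γ Λᵐᵒᵖ Y]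
    (T : Type) [AddCommGroup T] [Module Λ T] [Module Λᵐᵒᵖ T] [SMulCommClass Λ Λᵐᵒᵖ T]
    (β : X → Y → T) : Prop :=
  (∀ x₁ x₂ y, β (x₁ + x₂) y = β x₁ y + β x₂ y) ∧
  (∀ x y₁ y₂, β x (y₁ + y₂) = β x y₁ + β x y₂) ∧
  (∀ (a : Λ) x y, β (a • x) y = a • β x y) ∧
  (∀ (a : Λᵐᵒᵖ) x y, β x (a • y) = a • β x y) ∧
  (∀ (g : Γ) x y, β ((MulOpposite.op g) • x) y = β x (g • y)) ∧
  (∀ (W : Type) (i1 : AddCommGroup W) (i2 : Module Λ W) (i3 : Module Λᵐᵒᵖ W)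
      (i4 : SMulCommClass Λ Λᵐᵒᵖ W),
    ∀ b : X → Y → W,
      (∀ x₁ x₂ y, b (x₁ + x₂) y = b x₁ y + b x₂ y) →
      (∀ x y₁ y₂, b x (y₁ + y₂) = b x y₁ + b x y₂) →
      (∀ (a : Λ) x y, b (a • x) y = a • b x y) →
      (∀ (a : Λᵐᵒᵖ) x y, b x (a • y) = a • b x y) →
      (∀ (g : Γ) x y, b ((MulOpposite.op g) • x) y = b x (g • y)) →
      ∃! h : T → W,
        (∀ t₁ t₂, h (t₁ + t₂) = h t₁ + h t₂) ∧
        (∀ (a : Λ) t, h (a • t) = a • h t) ∧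
        (∀ (a : Λᵐᵒᵖ) t, h (a • t) = a • h t) ∧
        (∀ x y, h (β x y) = b x y))

/-- `Λ` is a direct summand of the `Λ`-`Λ`-bimodule `T`. -/
def IsBimodSummand (T : Type) [AddCommGroup T] [Module Λ T] [Module Λᵐᵒᵖ T]
    [SMulCommClass Λ Λᵐᵒᵖ T] : Prop :=
  ∃ (i : Λ → T) (p : T → Λ),
    (∀ a b : Λ, i (a + b) = i a + i b) ∧ (∀ (a : Λ) (c : Λ), i (a * c) = a • i c) ∧
    (∀ (a : Λ) (c : Λ), i (c * a) = (MulOpposite.op a) • i c) ∧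
    (∀ t₁ t₂, p (t₁ + t₂) = p t₁ + p t₂) ∧ (∀ (a : Λ) t, p (a • t) = a * p t) ∧
    (∀ (a : Λ) t, p ((MulOpposite.op a) • t) = p t * a) ∧
    (∀ a : Λ, p (i a) = a)

/-- `(J, γ)` is the induced `Λ`-module `X ⊗_Γ M`, characterized by its universal
property. -/
def IsInducedModule
    (X : Type) [AddCommGroup X] [Module Λ X] [Module Γᵐᵒᵖ X] [SMulCommClass Λ Γᵐᵒᵖ X]
    (M : Type) [AddCommGroup M] [Module Γ M]
    (J : Type) [AddCommGroup J] [Module Λ J] (γ : X → M → J) : Prop :=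
  (∀ x₁ x₂ m, γ (x₁ + x₂) m = γ x₁ m + γ x₂ m) ∧
  (∀ x m₁ m₂, γ x (m₁ + m₂) = γ x m₁ + γ x m₂) ∧
  (∀ (a : Λ) x m, γ (a • x) m = a • γ x m) ∧
  (∀ (g : Γ) x m, γ ((MulOpposite.op g) • x) m = γ x (g • m)) ∧
  (∀ (W : Type) (i1 : AddCommGroup W) (i2 : Module Λ W),
    ∀ b : X → M → W,
      (∀ x₁ x₂ m, b (x₁ + x₂) m = b x₁ m + b x₂ m) →
      (∀ x m₁ m₂, b x (m₁ + m₂) = b x m₁ + b x m₂) →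
      (∀ (a : Λ) x m, b (a • x) m = a • b x m) →
      (∀ (g : Γ) x m, b ((MulOpposite.op g) • x) m = b x (g • m)) →
      ∃! h : J →ₗ[Λ] W, ∀ x m, h (γ x m) = b x m)

end Bimod

/-!
Let `p : X ⊗_Γ Y → Λ` be the bimodule retraction and `c` the image of `1`, so that `p c = 1` and
`a • c = c • a`. For `y ∈ Y` and `m` in a `Λ`-module `M`, `x ↦ p (x ⊗ y) • m` lies in
`Hom_Λ(X, M)`; these maps let us test against `Hom_Λ(X, -)`. Since `Hom_ℤ(M, N)` is a
`Λ`-bimodule, the universal property of `X ⊗_Γ Y` applies to it: a bimodule map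
`X ⊗_Γ Y → Hom_ℤ(M, N)` is determined by its values on pure tensors.

In degree `0`, the maps `t ↦ f₁ ∘ (p t • -)` and `t ↦ f₂ ∘ (p t • -)` agree on pure tensors when
`f₁ ∘ - = f₂ ∘ -`, and evaluating at `c` gives `f₁ = f₂`. In higher degree, a `Γ`-linear retraction
`r` of `u ∘ -` gives the balanced map `(x, y) ↦ (e ↦ r (p (- ⊗ y) • e) x)`, whose lift `h`
satisfies `h t ∘ u = p t • -`; then `h c` is a retraction of `u`, `Λ`-linear because `c` is
central.
-/

open MulOpposite

section BimoduleMaps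

variable {Λ : Type} [Ring Λ]

-- `Λᵈᵐᵃ` is a synonym of `Λᵐᵒᵖ`; the action is `(op a • f) m = f (a • m)`.
abbrev AddMonoidHom.domModuleOp (M N : Type) [AddCommGroup M] [AddCommGroup N] [Module Λ M] :
    Module Λᵐᵒᵖ (M →+ N) :=
  inferInstanceAs (Module Λᵈᵐᵃ (M →+ N))

attribute [local instance] AddMonoidHom.domModuleOp

theorem AddMonoidHom.smulCommClass_domModuleOp (M N : Type) [AddCommGroup M] [AddCommGroup N]
    [Module Λ M] [Module Λ N] : SMulCommClass Λ Λᵐᵒᵖ (M →+ N) :=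
  ⟨fun _ _ _ => rfl⟩

structure IsBimodHom (Λ : Type) [Ring Λ] {T W : Type} [AddCommGroup T] [Module Λ T]
    [Module Λᵐᵒᵖ T] [AddCommGroup W] [Module Λ W] [Module Λᵐᵒᵖ W] (h : T → W) : Prop where
  map_add : ∀ t₁ t₂, h (t₁ + t₂) = h t₁ + h t₂
  map_smul : ∀ (a : Λ) t, h (a • t) = a • h t
  map_op_smul : ∀ (a : Λᵐᵒᵖ) t, h (a • t) = a • h t

structure IsBalanced (Λ Γ : Type) [Ring Λ] [Ring Γ] {X Y W : Type}
    [AddCommGroup X] [Module Λ X] [Module Γᵐᵒᵖ X] [AddCommGroup Y] [Module Γ Y] [Module Λᵐᵒᵖ Y]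
    [AddCommGroup W] [Module Λ W] [Module Λᵐᵒᵖ W] (b : X → Y → W) : Prop where
  add_left : ∀ x₁ x₂ y, b (x₁ + x₂) y = b x₁ y + b x₂ y
  add_right : ∀ x y₁ y₂, b x (y₁ + y₂) = b x y₁ + b x y₂
  smul_left : ∀ (a : Λ) x y, b (a • x) y = a • b x y
  op_smul_right : ∀ (a : Λᵐᵒᵖ) x y, b x (a • y) = a • b x y
  op_smul_left : ∀ (g : Γ) x y, b (op g • x) y = b x (g • y)

variable {T M N : Type} [AddCommGroup T] [Module Λ T] [Module Λᵐᵒᵖ T]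
  [AddCommGroup M] [Module Λ M] [AddCommGroup N] [Module Λ N]

theorem IsBimodHom.isBalanced_comp {Γ X Y W : Type} [Ring Γ] [AddCommGroup X] [Module Λ X]
    [Module Γᵐᵒᵖ X] [AddCommGroup Y] [Module Γ Y] [Module Λᵐᵒᵖ Y]
    [AddCommGroup W] [Module Λ W] [Module Λᵐᵒᵖ W] {h : T → W} (hh : IsBimodHom Λ h)
    {β : X → Y → T} (hβ : IsBalanced Λ Γ β) : IsBalanced Λ Γ (fun x y => h (β x y)) where
  add_left x₁ x₂ y := by rw [hβ.add_left, hh.map_add]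
  add_right x y₁ y₂ := by rw [hβ.add_right, hh.map_add]
  smul_left a x y := by rw [hβ.smul_left, hh.map_smul]
  op_smul_right a x y := by rw [hβ.op_smul_right, hh.map_op_smul]
  op_smul_left g x y := by rw [hβ.op_smul_left]

theorem IsBimodHom.smul_linearMap {p : T → Λ} (hp : IsBimodHom Λ p) (g : M →ₗ[Λ] N) :
    IsBimodHom Λ (fun t => p t • g.toAddMonoidHom) where
  map_add t₁ t₂ := by rw [hp.map_add, add_smul]
  map_smul a t := by rw [hp.map_smul, smul_eq_mul, mul_smul]
  map_op_smul a t := by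
    ext m
    change p (a • t) • g m = p t • g (a.unop • m)
    rw [hp.map_op_smul, MulOpposite.smul_eq_mul_unop, mul_smul, g.map_smul]

theorem IsBimodHom.comp_linearMap {E V : Type} [AddCommGroup E] [Module Λ E] [AddCommGroup V]
    [Module Λ V] {h : T → (E →+ V)} (hh : IsBimodHom Λ h) (u : M →ₗ[Λ] E) :
    IsBimodHom Λ (fun t => (h t).comp u.toAddMonoidHom) where
  map_add t₁ t₂ := by rw [hh.map_add, AddMonoidHom.add_comp]
  map_smul a t := by rw [hh.map_smul]; rfl
  map_op_smul a t := by
    ext m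
    change h (a • t) (u m) = h t (u (a.unop • m))
    rw [hh.map_op_smul, u.map_smul]
    rfl

def IsBimodHom.evalCentral {E V : Type} [AddCommGroup E] [Module Λ E] [AddCommGroup V]
    [Module Λ V] {h : T → (E →+ V)} (hh : IsBimodHom Λ h) {c : T}
    (hc : ∀ a : Λ, op a • c = a • c) : E →ₗ[Λ] V where
  toFun := h c
  map_add' := (h c).map_add
  map_smul' a e := by
    change (op a • h c) e = (a • h c) e
    rw [← hh.map_op_smul, ← hh.map_smul, hc]

end BimoduleMaps

section BimodTensor

variable {Λ Γ X Y T : Type} [Ring Λ] [Ring Γ]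
  [AddCommGroup X] [Module Λ X] [Module Γᵐᵒᵖ X] [SMulCommClass Λ Γᵐᵒᵖ X]
  [AddCommGroup Y] [Module Γ Y] [Module Λᵐᵒᵖ Y] [SMulCommClass Γ Λᵐᵒᵖ Y]
  [AddCommGroup T] [Module Λ T] [Module Λᵐᵒᵖ T] [SMulCommClass Λ Λᵐᵒᵖ T]
  {β : X → Y → T}

theorem IsBimodTensor.isBalanced (hT : IsBimodTensor Λ Γ X Y T β) : IsBalanced Λ Γ β :=
  ⟨hT.1, hT.2.1, hT.2.2.1, hT.2.2.2.1, hT.2.2.2.2.1⟩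

theorem IsBimodTensor.existsUnique_lift (hT : IsBimodTensor Λ Γ X Y T β) {W : Type}
    [AddCommGroup W] [Module Λ W] [Module Λᵐᵒᵖ W] [SMulCommClass Λ Λᵐᵒᵖ W] {b : X → Y → W}
    (hb : IsBalanced Λ Γ b) : ∃! h : T → W, IsBimodHom Λ h ∧ ∀ x y, h (β x y) = b x y := by
  obtain ⟨h, ⟨hadd, hsmul, hop, hβ⟩, huniq⟩ := hT.2.2.2.2.2 W ‹_› ‹_› ‹_› ‹_› b
    hb.add_left hb.add_right hb.smul_left hb.op_smul_right hb.op_smul_left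
  exact ⟨h, ⟨⟨hadd, hsmul, hop⟩, hβ⟩, fun h' ⟨hh', hβ'⟩ =>
    huniq h' ⟨hh'.map_add, hh'.map_smul, hh'.map_op_smul, hβ'⟩⟩

theorem IsBimodTensor.hom_ext (hT : IsBimodTensor Λ Γ X Y T β) {W : Type}
    [AddCommGroup W] [Module Λ W] [Module Λᵐᵒᵖ W] [SMulCommClass Λ Λᵐᵒᵖ W] {h₁ h₂ : T → W}
    (hh₁ : IsBimodHom Λ h₁) (hh₂ : IsBimodHom Λ h₂) (h : ∀ x y, h₁ (β x y) = h₂ (β x y)) :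
    h₁ = h₂ :=
  (hT.existsUnique_lift (hh₁.isBalanced_comp hT.isBalanced)).unique
    ⟨hh₁, fun _ _ => rfl⟩ ⟨hh₂, fun x y => (h x y).symm⟩

theorem IsBimodSummand.exists_central (hs : IsBimodSummand Λ T) :
    ∃ (c : T) (p : T → Λ), IsBimodHom Λ p ∧ p c = 1 ∧ ∀ a : Λ, op a • c = a • c := by
  obtain ⟨i, p, -, iml, imr, padd, pml, pmr, pip⟩ := hs
  refine ⟨i 1, p, ⟨padd, pml, fun a t => ?_⟩, pip 1, fun a => ?_⟩
  · simpa using pmr a.unop t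
  · rw [← imr, ← iml, one_mul, mul_one]

end BimodTensor

section Pairing

attribute [local instance] AddMonoidHom.domModuleOp homModule

variable {Λ Γ X Y T : Type} [Ring Λ] [Ring Γ]
  [AddCommGroup X] [Module Λ X] [Module Γᵐᵒᵖ X] [AddCommGroup Y] [Module Γ Y] [Module Λᵐᵒᵖ Y]
  [AddCommGroup T] [Module Λ T] [Module Λᵐᵒᵖ T] {β : X → Y → T} {p : T → Λ}
  {M N : Type} [AddCommGroup M] [Module Λ M] [AddCommGroup N] [Module Λ N]

def pairingHom (hβ : IsBalanced Λ Γ β) (hp : IsBimodHom Λ p) (y : Y) (m : M) : X →ₗ[Λ] M where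
  toFun x := p (β x y) • m
  map_add' x₁ x₂ := by rw [hβ.add_left, hp.map_add, add_smul]
  map_smul' a x := by rw [hβ.smul_left, hp.map_smul, smul_eq_mul, mul_smul]; rfl

variable (hβ : IsBalanced Λ Γ β) (hp : IsBimodHom Λ p)

theorem pairingHom_apply (y : Y) (m : M) (x : X) : pairingHom hβ hp y m x = p (β x y) • m :=
  rfl

theorem pairingHom_add_left (y₁ y₂ : Y) (m : M) :
    pairingHom hβ hp (y₁ + y₂) m = pairingHom hβ hp y₁ m + pairingHom hβ hp y₂ m := by
  ext x
  simp only [pairingHom_apply, LinearMap.add_apply, hβ.add_right, hp.map_add, add_smul]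

theorem pairingHom_add_right (y : Y) (m₁ m₂ : M) :
    pairingHom hβ hp y (m₁ + m₂) = pairingHom hβ hp y m₁ + pairingHom hβ hp y m₂ := by
  ext x
  simp only [pairingHom_apply, LinearMap.add_apply, smul_add]

theorem pairingHom_op_smul (a : Λᵐᵒᵖ) (y : Y) (m : M) :
    pairingHom hβ hp (a • y) m = pairingHom hβ hp y (a.unop • m) := by
  ext x
  rw [pairingHom_apply, pairingHom_apply, hβ.op_smul_right, hp.map_op_smul,
    MulOpposite.smul_eq_mul_unop, mul_smul]

theorem LinearMap.comp_pairingHom (f : M →ₗ[Λ] N) (y : Y) (m : M) :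
    f ∘ₗ pairingHom hβ hp y m = pairingHom hβ hp y (f m) := by
  ext x
  simp only [LinearMap.comp_apply, pairingHom_apply, f.map_smul]

variable [SMulCommClass Λ Γᵐᵒᵖ X]

theorem smul_pairingHom (g : Γ) (y : Y) (m : M) :
    g • pairingHom hβ hp y m = pairingHom hβ hp (g • y) m := by
  ext x
  change p (β (op g • x) y) • m = p (β x (g • y)) • m
  rw [hβ.op_smul_left]

def transferHom {E V : Type} [AddCommGroup E] [Module Λ E] [AddCommGroup V] [Module Λ V]
    (r : (X →ₗ[Λ] E) →ₗ[Γ] (X →ₗ[Λ] V)) (x : X) (y : Y) : E →+ V :=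
  AddMonoidHom.mk' (fun e => r (pairingHom hβ hp y e) x) fun e₁ e₂ => by
    simp only [pairingHom_add_right, map_add, LinearMap.add_apply]

theorem isBalanced_transferHom {E V : Type} [AddCommGroup E] [Module Λ E] [AddCommGroup V]
    [Module Λ V] (r : (X →ₗ[Λ] E) →ₗ[Γ] (X →ₗ[Λ] V)) :
    IsBalanced Λ Γ (transferHom hβ hp r) where
  add_left x₁ x₂ y := by ext e; exact (r (pairingHom hβ hp y e)).map_add x₁ x₂
  add_right x y₁ y₂ := by
    ext e
    simp only [transferHom, AddMonoidHom.mk'_apply, AddMonoidHom.add_apply, pairingHom_add_left,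
      map_add, LinearMap.add_apply]
  smul_left a x y := by ext e; exact (r (pairingHom hβ hp y e)).map_smul a x
  op_smul_right a x y := by
    ext e
    change r (pairingHom hβ hp (a • y) e) x = r (pairingHom hβ hp y (a.unop • e)) x
    rw [pairingHom_op_smul]
  op_smul_left g x y := by
    ext e
    change (g • r (pairingHom hβ hp y e)) x = r (pairingHom hβ hp (g • y) e) x
    rw [← map_smul, smul_pairingHom]

end Pairing

section Retraction

attribute [local instance] AddMonoidHom.domModuleOp AddMonoidHom.smulCommClass_domModuleOp
  homModule

variable {Λ Γ X Y T : Type} [Ring Λ] [Ring Γ]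
  [AddCommGroup X] [Module Λ X] [Module Γᵐᵒᵖ X] [SMulCommClass Λ Γᵐᵒᵖ X]
  [AddCommGroup Y] [Module Γ Y] [Module Λᵐᵒᵖ Y] [SMulCommClass Γ Λᵐᵒᵖ Y]
  [AddCommGroup T] [Module Λ T] [Module Λᵐᵒᵖ T] [SMulCommClass Λ Λᵐᵒᵖ T]
  {β : X → Y → T} {p : T → Λ} {c : T}

theorem IsBimodTensor.comp_injective (hT : IsBimodTensor Λ Γ X Y T β) (hp : IsBimodHom Λ p)
    (hc : p c = 1) {M N : Type} [AddCommGroup M] [Module Λ M] [AddCommGroup N] [Module Λ N] :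
    Function.Injective fun (f : M →ₗ[Λ] N) (g : X →ₗ[Λ] M) => f ∘ₗ g := by
  intro f₁ f₂ h
  have key : (fun t => p t • f₁.toAddMonoidHom) = fun t => p t • f₂.toAddMonoidHom :=
    hT.hom_ext (hp.smul_linearMap f₁) (hp.smul_linearMap f₂) fun x y => AddMonoidHom.ext fun m => by
      simpa [pairingHom_apply] using
        LinearMap.congr_fun (congrFun h (pairingHom hT.isBalanced hp y m)) x
  ext m
  simpa [hc] using DFunLike.congr_fun (congrFun key c) m

theorem IsBimodTensor.exists_retraction_of_hom_retraction (hT : IsBimodTensor Λ Γ X Y T β)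
    (hp : IsBimodHom Λ p) (hc : p c = 1) (hcentral : ∀ a : Λ, op a • c = a • c)
    {E V : Type} [AddCommGroup E] [Module Λ E] [AddCommGroup V] [Module Λ V] (u : V →ₗ[Λ] E)
    (r : (X →ₗ[Λ] E) →ₗ[Γ] (X →ₗ[Λ] V)) (hr : ∀ g, r (u ∘ₗ g) = g) :
    ∃ s : E →ₗ[Λ] V, ∀ z, s (u z) = z := by
  obtain ⟨h, hh, hβ⟩ :=
    (hT.existsUnique_lift (isBalanced_transferHom hT.isBalanced hp r)).exists
  have key : (fun t => (h t).comp u.toAddMonoidHom) =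
      fun t => p t • (LinearMap.id : V →ₗ[Λ] V).toAddMonoidHom :=
    hT.hom_ext (hh.comp_linearMap u) (hp.smul_linearMap LinearMap.id) fun x y =>
      AddMonoidHom.ext fun z => by
        change h (β x y) (u z) = p (β x y) • z
        rw [hβ]
        change r (pairingHom hT.isBalanced hp y (u z)) x = p (β x y) • z
        rw [← LinearMap.comp_pairingHom, hr, pairingHom_apply]
  refine ⟨hh.evalCentral hcentral, fun z => ?_⟩
  change h c (u z) = z
  simpa [hc] using DFunLike.congr_fun (congrFun key c) z

end Retraction

theorem stmt_4_general (Λ Γ : Type) [Ring Λ] [Ring Γ]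
    (X : Type) [AddCommGroup X] [Module Λ X] [Module Γᵐᵒᵖ X] [SMulCommClass Λ Γᵐᵒᵖ X]
    (Y : Type) [AddCommGroup Y] [Module Γ Y] [Module Λᵐᵒᵖ Y] [SMulCommClass Γ Λᵐᵒᵖ Y]
    (T : Type) [AddCommGroup T] [Module Λ T] [Module Λᵐᵒᵖ T] [SMulCommClass Λ Λᵐᵒᵖ T]
    (β : X → Y → T) (hT : IsBimodTensor Λ Γ X Y T β)
    (hsum : IsBimodSummand Λ T) :
    -- degree 0: injectivity of `Hom_Λ(U,V) → Hom_Γ(Hom_Λ(X,U), Hom_Λ(X,V))`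
    (∀ (U : Type) (iU1 : AddCommGroup U) (iU2 : Module Λ U)
       (V : Type) (iV1 : AddCommGroup V) (iV2 : Module Λ V),
      Module.Finite Λ U → Module.Finite Λ V →
      Function.Injective
        (fun (f : U →ₗ[Λ] V) => (fun (h : X →ₗ[Λ] U) => f.comp h))) ∧
    -- degrees `n ≥ 1`: an extension whose image under `Hom_Λ(X,−)` splits over `Γ` splits
    (∀ (U : Type) (iU1 : AddCommGroup U) (iU2 : Module Λ U)
       (V : Type) (iV1 : AddCommGroup V) (iV2 : Module Λ V)
       (E : Type) (iE1 : AddCommGroup E) (iE2 : Module Λ E),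
      Module.Finite Λ U → Module.Finite Λ V → Module.Finite Λ E →
      ∀ (u : V →ₗ[Λ] E) (v : E →ₗ[Λ] U),
        Function.Injective u → Function.Surjective v →
        LinearMap.range u = LinearMap.ker v →
        (letI : Module Γ (X →ₗ[Λ] E) := homModule Λ Γ X E
         letI : Module Γ (X →ₗ[Λ] V) := homModule Λ Γ X V
         ∃ r : (X →ₗ[Λ] E) →ₗ[Γ] (X →ₗ[Λ] V),
           ∀ h : X →ₗ[Λ] V, r (u.comp h) = h) →
        (∃ r : E →ₗ[Λ] V, ∀ z : V, r (u z) = z)) := by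
  obtain ⟨c, p, hp, hc, hcentral⟩ := hsum.exists_central
  exact ⟨fun _ _ _ _ _ _ _ _ => hT.comp_injective hp hc,
    fun _ _ _ _ _ _ _ _ _ _ _ _ u _ _ _ _ ⟨r, hr⟩ =>
      hT.exists_retraction_of_hom_retraction hp hc hcentral u r hr⟩

/-- The first part of the proof of Theorem 2.3: if `X` is a `Λ`-`Γ`-bimodule and `Y` a
`Γ`-`Λ`-bimodule, both projective as left modules, such that `Λ` is a direct summand of
`X ⊗_Γ Y` as a `Λ`-`Λ`-bimodule, then for every `n ≥ 0` and all finitely generated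
`Λ`-modules `U, V` the map `Ext^n_Λ(U,V) → Ext^n_Γ(Hom_Λ(X,U), Hom_Λ(X,V))` induced by
`Hom_Λ(X,−)` is injective.  (The degree `0` case is injectivity on `Hom`; the cases `n ≥ 1`
are expressed by the equivalent statement that an extension of `Λ`-modules whose image under
`Hom_Λ(X,−)` splits `Γ`-linearly is itself split.) -/
theorem stmt_4 (k Λ Γ : Type) [Field k]
    [Ring Λ] [Algebra k Λ] [FiniteDimensional k Λ]
    [Ring Γ] [Algebra k Γ] [FiniteDimensional k Γ]
    (X : Type) [AddCommGroup X] [Module Λ X] [Module Γᵐᵒᵖ X] [SMulCommClass Λ Γᵐᵒᵖ X]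
    (Y : Type) [AddCommGroup Y] [Module Γ Y] [Module Λᵐᵒᵖ Y] [SMulCommClass Γ Λᵐᵒᵖ Y]
    (hX1 : Module.Projective Λ X) (hY1 : Module.Projective Γ Y)
    (T : Type) [AddCommGroup T] [Module Λ T] [Module Λᵐᵒᵖ T] [SMulCommClass Λ Λᵐᵒᵖ T]
    (β : X → Y → T) (hT : IsBimodTensor Λ Γ X Y T β)
    (hsum : IsBimodSummand Λ T) :
    -- degree 0: injectivity of `Hom_Λ(U,V) → Hom_Γ(Hom_Λ(X,U), Hom_Λ(X,V))`
    (∀ (U : Type) (iU1 : AddCommGroup U) (iU2 : Module Λ U)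
       (V : Type) (iV1 : AddCommGroup V) (iV2 : Module Λ V),
      Module.Finite Λ U → Module.Finite Λ V →
      Function.Injective
        (fun (f : U →ₗ[Λ] V) => (fun (h : X →ₗ[Λ] U) => f.comp h))) ∧
    -- degrees `n ≥ 1`: an extension whose image under `Hom_Λ(X,−)` splits over `Γ` splits
    (∀ (U : Type) (iU1 : AddCommGroup U) (iU2 : Module Λ U)
       (V : Type) (iV1 : AddCommGroup V) (iV2 : Module Λ V)
       (E : Type) (iE1 : AddCommGroup E) (iE2 : Module Λ E),
      Module.Finite Λ U → Module.Finite Λ V → Module.Finite Λ E →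
      ∀ (u : V →ₗ[Λ] E) (v : E →ₗ[Λ] U),
        Function.Injective u → Function.Surjective v →
        LinearMap.range u = LinearMap.ker v →
        (letI : Module Γ (X →ₗ[Λ] E) := homModule Λ Γ X E
         letI : Module Γ (X →ₗ[Λ] V) := homModule Λ Γ X V
         ∃ r : (X →ₗ[Λ] E) →ₗ[Γ] (X →ₗ[Λ] V),
           ∀ h : X →ₗ[Λ] V, r (u.comp h) = h) →
        (∃ r : E →ₗ[Λ] V, ∀ z : V, r (u z) = z)) :=
  stmt_4_general Λ Γ X Y T β hT hsum
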